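/- (Proposition 2, multiplicative identification, discrete-covariate form.) Consider the dyadic setup and let Y : Ω → ℝ be a nonnegative integrable random variable. Assume: (1) multiplicative outcome model: the conditional expectation of Y given the σ-algebra generated by (U, A, C, Z, S) equals exp(U + b(S, A, C) + τ(S, C)) almost everywhere, for measurable functions b and τ, with exp(U) integrable given each event {W = w, S = s}; (2) tilting: for every w = (a, c, z) and every s ∈ {1,2,3} there is α_s ∈ ℝ such that law(U | W = w, S = s) is the exponential tilt by α_s of law(U | W = w, S = 0), with the moment generating function of law(U | W = w, S = 0) finite on an open interval containing all α_s and the point 1 + α_s; (3) mean independence: E[U | W = w] depends on w only through c; (4) for every s, the law of Δ_s := U − E[U | W = w, S = s] under μ(· | W = w, S = s) depends on w only through c. Then for every w = (a, c, z) and every s ∈ {1,2,3}, E[Y | W = w, S = s] = exp( Σ_{s̃ ≠ s} β^{s s̃}(c) · μ(S = s̃ | W = w) + b(s, a, c) + τ̄(s, c) ), where β^{s s̃}(c) := E[U | W = w, S = s] − E[U | W = w, S = s̃] depends on w only through c, and τ̄(s, c) := τ(s, c) + E[U | W = w] + log E[exp(Δ_s) | W = w, S = s] depends only on (s, c). -/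

import Mathlib

open MeasureTheory ProbabilityTheory

/-- The exponential tilt of a measure `ν` on `ℝ` by `α`: the probability measure absolutely
continuous with respect to `ν` with density `x ↦ exp (α x) / ∫ exp (α y) dν(y)`. -/
noncomputable def expTilt (ν : Measure ℝ) (α : ℝ) : Measure ℝ :=
  ν.withDensity fun x => ENNReal.ofReal (Real.exp (α * x) / ∫ y, Real.exp (α * y) ∂ν)

/-- The conditional mean `E[U | B] = (1/μ(B)) ∫_B U dμ`. -/
noncomputable def condMean {Ω : Type*} [MeasurableSpace Ω] (μ : Measure Ω)
    (U : Ω → ℝ) (B : Set Ω) : ℝ :=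
  (μ B).toReal⁻¹ * ∫ ω in B, U ω ∂μ

/-- The event `{W = (a, c, z)}` in the dyadic setup. -/
def wEvent {Ω 𝒜 𝒞 𝒵 : Type*} (A : Ω → 𝒜) (C : Ω → 𝒞) (Z : Ω → 𝒵)
    (a : 𝒜) (c : 𝒞) (z : 𝒵) : Set Ω :=
  {ω | A ω = a ∧ C ω = c ∧ Z ω = z}

/-- The event `{W = (a, c, z), S = s}` in the dyadic setup. -/
def dyadEvent {Ω 𝒜 𝒞 𝒵 : Type*} (A : Ω → 𝒜) (C : Ω → 𝒞) (Z : Ω → 𝒵) (S : Ω → Fin 4)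
    (a : 𝒜) (c : 𝒞) (z : 𝒵) (s : Fin 4) : Set Ω :=
  {ω | A ω = a ∧ C ω = c ∧ Z ω = z ∧ S ω = s}

/-! By the tower property `E[Y | W = w, S = s] = exp (b + τ) E[exp U | W = w, S = s]`, and since
the conditional means `mₜ = E[U | W = w, S = t]` average to `E[U | W = w]` with weights
`μ(S = t | W = w)`, the weighted sum of the gaps `mₛ - mₜ` is `mₛ - E[U | W = w]`; the exponent
on the right then collapses to `b + τ + log E[exp U | W = w, S = s]`.

That `β^{s t}` depends on `w` only through `c` is where the assumptions enter: by (4) at `s = 0`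
the baseline laws of `U` for two values of `w` sharing `c` are translates of each other,
exponential tilting commutes with translation, so by (2) every `mₛ` moves by the same amount
as `m₀`. -/

open Function

section condMean

variable {Ω : Type*} [MeasurableSpace Ω] {μ : Measure Ω}

lemma condMean_eq_integral_cond (f : Ω → ℝ) (B : Set Ω) :
    condMean μ f B = ∫ ω, f ω ∂μ[|B] := by
  rw [ProbabilityTheory.cond, integral_smul_measure, smul_eq_mul, ENNReal.toReal_inv]
  rfl

lemma condMean_eq_integral_map {U : Ω → ℝ} (hU : Measurable U) (B : Set Ω) :
    condMean μ U B = ∫ x, x ∂(μ[|B]).map U := by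
  rw [condMean_eq_integral_cond, integral_map hU.aemeasurable measurable_id'.aestronglyMeasurable]

lemma condMean_const_mul (k : ℝ) (f : Ω → ℝ) (B : Set Ω) :
    condMean μ (fun ω => k * f ω) B = k * condMean μ f B := by
  simp only [condMean, integral_const_mul]
  ring

lemma condMean_congr {f g : Ω → ℝ} {B : Set Ω} (hB : MeasurableSet B) (hfg : Set.EqOn f g B) :
    condMean μ f B = condMean μ g B := by
  rw [condMean, condMean, setIntegral_congr_fun hB hfg]

lemma condMean_mul_measureReal [IsFiniteMeasure μ] (f : Ω → ℝ) (B : Set Ω) :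
    condMean μ f B * μ.real B = ∫ ω in B, f ω ∂μ := by
  rcases eq_or_ne (μ B) 0 with hB | hB
  · simp [Measure.restrict_eq_zero.mpr hB, measureReal_def, hB]
  · have : μ.real B ≠ 0 := (ENNReal.toReal_pos hB (measure_ne_top μ B)).ne'
    rw [condMean, ← measureReal_def]
    field_simp

lemma condMean_exp_pos [IsFiniteMeasure μ] {f : Ω → ℝ} {B : Set Ω} (hB : μ B ≠ 0)
    (hf : IntegrableOn (fun ω => Real.exp (f ω)) B μ) :
    0 < condMean μ (fun ω => Real.exp (f ω)) B := by
  have := cond_isProbabilityMeasure (μ := μ) hB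
  rw [condMean_eq_integral_cond]
  exact integral_exp_pos (hf.smul_measure (ENNReal.inv_ne_top.mpr hB))

lemma log_condMean_exp_sub {f : Ω → ℝ} {B : Set Ω}
    (hf : 0 < condMean μ (fun ω => Real.exp (f ω)) B) (m : ℝ) :
    Real.log (condMean μ (fun ω => Real.exp (f ω - m)) B)
      = Real.log (condMean μ (fun ω => Real.exp (f ω)) B) - m := by
  simp_rw [Real.exp_sub, div_eq_inv_mul]
  rw [condMean_const_mul, Real.log_mul (by positivity) hf.ne', Real.log_inv, Real.log_exp]
  ring

lemma condMean_iUnion_eq_sum [IsFiniteMeasure μ] {ι : Type*} [Fintype ι] {B : ι → Set Ω}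
    (hB : ∀ i, MeasurableSet (B i)) (hdisj : Pairwise (Disjoint on B)) {f : Ω → ℝ}
    (hf : ∀ i, IntegrableOn f (B i) μ) :
    condMean μ f (⋃ i, B i)
      = ∑ i, condMean μ f (B i) * (μ.real (B i) / μ.real (⋃ i, B i)) := by
  simp_rw [← mul_div_assoc, ← Finset.sum_div, condMean_mul_measureReal,
    ← integral_iUnion_fintype hB hdisj hf, condMean, measureReal_def, div_eq_inv_mul]

lemma sum_sub_condMean_mul_eq [IsFiniteMeasure μ] {ι : Type*} [Fintype ι] {B : ι → Set Ω}
    (hB : ∀ i, MeasurableSet (B i)) (hdisj : Pairwise (Disjoint on B))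
    (hpos : μ (⋃ i, B i) ≠ 0) {f : Ω → ℝ} (hf : ∀ i, IntegrableOn f (B i) μ) (m : ℝ) :
    ∑ i, (m - condMean μ f (B i)) * (μ.real (B i) / μ.real (⋃ i, B i))
      = m - condMean μ f (⋃ i, B i) := by
  have hsum : ∑ i, μ.real (B i) / μ.real (⋃ i, B i) = 1 := by
    have : μ.real (⋃ i, B i) ≠ 0 := (ENNReal.toReal_pos hpos (measure_ne_top μ _)).ne'
    rw [← Finset.sum_div, ← measureReal_iUnion_fintype hdisj hB, div_self this]
  simp_rw [sub_mul, Finset.sum_sub_distrib, ← Finset.mul_sum, hsum, mul_one,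
    condMean_iUnion_eq_sum hB hdisj hf]

end condMean

lemma condMean_eq_of_condExp_ae_eq {Ω : Type*} {m : MeasurableSpace Ω} [mΩ : MeasurableSpace Ω]
    {μ : Measure Ω} (hm : m ≤ mΩ) [SigmaFinite (μ.trim hm)] {Y g : Ω → ℝ}
    (hY : Integrable Y μ) (hYg : μ[Y|m] =ᵐ[μ] g)
    {B : Set Ω} (hB : MeasurableSet[m] B) :
    condMean μ Y B = condMean μ g B := by
  rw [condMean, condMean, ← setIntegral_condExp hm hY hB,
    setIntegral_congr_ae (hm B hB) (hYg.mono fun _ h _ => h)]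

section expTilt

variable {ν : Measure ℝ} {α : ℝ}

lemma integral_expTilt (ν : Measure ℝ) (α : ℝ) :
    ∫ x, x ∂expTilt ν α = (∫ x, x * Real.exp (α * x) ∂ν) / ∫ x, Real.exp (α * x) ∂ν := by
  rw [expTilt, ← Measure.tilted, integral_tilted, ← integral_div]
  congr 1 with x
  rw [smul_eq_mul]
  ring

lemma integral_expTilt_map_add [IsProbabilityMeasure ν]
    (hα : α ∈ interior (integrableExpSet id ν)) (δ : ℝ) :
    ∫ x, x ∂expTilt (ν.map (· + δ)) α = ∫ x, x ∂expTilt ν α + δ := by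
  have hexp : Integrable (fun x => Real.exp (α * x)) ν :=
    interior_subset (s := integrableExpSet id ν) hα
  have hmul : Integrable (fun x => x * Real.exp (α * x)) ν := by
    simpa using integrable_pow_mul_exp_of_mem_interior_integrableExpSet hα 1
  have hshift : ∀ x, Real.exp (α * (x + δ)) = Real.exp (α * δ) * Real.exp (α * x) := fun x => by
    rw [← Real.exp_add]; ring_nf
  have hZ : ∫ x, Real.exp (α * x) ∂ν.map (· + δ)
      = Real.exp (α * δ) * ∫ x, Real.exp (α * x) ∂ν := by
    rw [integral_map (by fun_prop) (by fun_prop)]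
    simp_rw [hshift, integral_const_mul]
  have hN : ∫ x, x * Real.exp (α * x) ∂ν.map (· + δ)
      = Real.exp (α * δ) * (∫ x, x * Real.exp (α * x) ∂ν + δ * ∫ x, Real.exp (α * x) ∂ν) := by
    rw [integral_map (by fun_prop) (by fun_prop), ← integral_const_mul, ← integral_add hmul
      (hexp.const_mul δ), ← integral_const_mul]
    congr 1 with x
    rw [hshift]
    ring
  have hpos : 0 < ∫ x, Real.exp (α * x) ∂ν := integral_exp_pos hexp
  rw [integral_expTilt, integral_expTilt, hZ, hN]
  field_simp

lemma eq_map_add_of_map_sub_eq {ν' : Measure ℝ} {m m' : ℝ}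
    (h : ν.map (· - m) = ν'.map (· - m')) : ν' = ν.map (· + (m' - m)) := by
  calc ν' = (ν'.map (· - m')).map (· + m') := by
        rw [Measure.map_map (by fun_prop) (by fun_prop)]
        simp [Function.comp_def]
    _ = (ν.map (· - m)).map (· + m') := by rw [h]
    _ = ν.map (· + (m' - m)) := by
        rw [Measure.map_map (by fun_prop) (by fun_prop)]
        congr 1 with x
        simp only [Function.comp_apply]
        ring

lemma integral_expTilt_sub_eq_of_map_sub_eq [IsProbabilityMeasure ν] {ν' : Measure ℝ} {m m' : ℝ}
    (h : ν.map (· - m) = ν'.map (· - m')) (hα : α ∈ interior (integrableExpSet id ν)) :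
    ∫ x, x ∂expTilt ν α - m = ∫ x, x ∂expTilt ν' α - m' := by
  rw [eq_map_add_of_map_sub_eq h, integral_expTilt_map_add hα]
  ring

end expTilt

lemma condMean_sub_condMean_eq_of_map_eq_expTilt {Ω : Type*} [MeasurableSpace Ω] {μ : Measure Ω}
    [IsFiniteMeasure μ] {U : Ω → ℝ} (hU : Measurable U) {B₀ B B₀' B' : Set Ω} (hB₀ : μ B₀ ≠ 0)
    {α : ℝ} (htilt : (μ[|B]).map U = expTilt ((μ[|B₀]).map U) α)
    (htilt' : (μ[|B']).map U = expTilt ((μ[|B₀']).map U) α)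
    (hcent : (μ[|B₀]).map (fun ω => U ω - condMean μ U B₀)
      = (μ[|B₀']).map (fun ω => U ω - condMean μ U B₀'))
    (hα : α ∈ interior (integrableExpSet id ((μ[|B₀]).map U))) :
    condMean μ U B - condMean μ U B₀ = condMean μ U B' - condMean μ U B₀' := by
  have := cond_isProbabilityMeasure (μ := μ) hB₀
  have := Measure.isProbabilityMeasure_map (μ := μ[|B₀]) hU.aemeasurable
  have hmap : ∀ (B : Set Ω) (m : ℝ),
      (μ[|B]).map (fun ω => U ω - m) = ((μ[|B]).map U).map (· - m) := fun B m => by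
    rw [Measure.map_map (by fun_prop) hU]
    rfl
  rw [hmap, hmap] at hcent
  rw [condMean_eq_integral_map hU B, htilt, condMean_eq_integral_map hU B', htilt']
  exact integral_expTilt_sub_eq_of_map_sub_eq hcent hα

section dyadEvent

variable {Ω 𝒜 𝒞 𝒵 : Type*} (A : Ω → 𝒜) (C : Ω → 𝒞) (Z : Ω → 𝒵) (S : Ω → Fin 4)
  {a : 𝒜} {c : 𝒞} {z : 𝒵}

lemma iUnion_dyadEvent : ⋃ s, dyadEvent A C Z S a c z s = wEvent A C Z a c z := by
  ext ω
  simp [dyadEvent, wEvent]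

lemma pairwise_disjoint_dyadEvent : Pairwise (Disjoint on dyadEvent A C Z S a c z) :=
  fun _ _ hst => Set.disjoint_left.mpr fun _ hs ht => hst (hs.2.2.2.symm.trans ht.2.2.2)

lemma measurableSet_comap_dyadEvent [MeasurableSpace 𝒜] [MeasurableSingletonClass 𝒜]
    [MeasurableSpace 𝒞] [MeasurableSingletonClass 𝒞] [MeasurableSpace 𝒵]
    [MeasurableSingletonClass 𝒵] {X : Type*} [MeasurableSpace X] (U : Ω → X) (s : Fin 4) :
    MeasurableSet[MeasurableSpace.comap (fun ω => (U ω, A ω, C ω, Z ω, S ω)) inferInstance]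
      (dyadEvent A C Z S a c z s) :=
  ⟨Set.univ ×ˢ {a} ×ˢ {c} ×ˢ {z} ×ˢ {s}, by measurability, by ext; simp [dyadEvent, eq_comm]⟩

end dyadEvent

lemma condMean_dyadEvent_eq_of_condExp_eq {Ω 𝒜 𝒞 𝒵 : Type*} [MeasurableSpace Ω]
    [MeasurableSpace 𝒜] [MeasurableSingletonClass 𝒜] [MeasurableSpace 𝒞]
    [MeasurableSingletonClass 𝒞] [MeasurableSpace 𝒵] [MeasurableSingletonClass 𝒵]
    {μ : Measure Ω} [IsFiniteMeasure μ] {A : Ω → 𝒜} {C : Ω → 𝒞} {Z : Ω → 𝒵} {S : Ω → Fin 4}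
    {U : Ω → ℝ} (hφ : Measurable fun ω => (U ω, A ω, C ω, Z ω, S ω)) {Y : Ω → ℝ}
    (hY : Integrable Y μ) {b : Fin 4 → 𝒜 → 𝒞 → ℝ} {τ : Fin 4 → 𝒞 → ℝ}
    (houtcome :
      μ[Y | MeasurableSpace.comap (fun ω => (U ω, A ω, C ω, Z ω, S ω)) inferInstance]
        =ᵐ[μ] fun ω => Real.exp (U ω + b (S ω) (A ω) (C ω) + τ (S ω) (C ω)))
    (a : 𝒜) (c : 𝒞) (z : 𝒵) (s : Fin 4) :
    condMean μ Y (dyadEvent A C Z S a c z s)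
      = Real.exp (b s a c + τ s c)
        * condMean μ (fun ω => Real.exp (U ω)) (dyadEvent A C Z S a c z s) := by
  have hE := measurableSet_comap_dyadEvent (a := a) (c := c) (z := z) A C Z S U s
  rw [condMean_eq_of_condExp_ae_eq hφ.comap_le hY houtcome hE, ← condMean_const_mul]
  refine condMean_congr (hφ.comap_le _ hE) fun ω ⟨ha, hc, _, hs⟩ => ?_
  simp only [ha, hc, hs, ← Real.exp_add]
  ring_nf

theorem proposition_two_multiplicative_identification_general
    {Ω 𝒜 𝒞 𝒵 : Type*} [MeasurableSpace Ω]
    [MeasurableSpace 𝒜] [MeasurableSingletonClass 𝒜]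
    [MeasurableSpace 𝒞] [MeasurableSingletonClass 𝒞]
    [MeasurableSpace 𝒵] [MeasurableSingletonClass 𝒵]
    (μ : Measure Ω) [IsProbabilityMeasure μ]
    (A : Ω → 𝒜) (C : Ω → 𝒞) (Z : Ω → 𝒵) (S : Ω → Fin 4)
    (hA : Measurable A) (hC : Measurable C) (hZ : Measurable Z) (hS : Measurable S)
    (U : Ω → ℝ) (hU : Measurable U) (hUint : Integrable U μ)
    (Y : Ω → ℝ) (hYint : Integrable Y μ)
    (b : Fin 4 → 𝒜 → 𝒞 → ℝ) (τ : Fin 4 → 𝒞 → ℝ) (α : Fin 4 → ℝ)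
    (hpos : ∀ (a : 𝒜) (c : 𝒞) (z : 𝒵) (s : Fin 4), 0 < μ (dyadEvent A C Z S a c z s))
    -- (1) multiplicative outcome model w.r.t. the σ-algebra generated by (U, A, C, Z, S)
    (houtcome :
      μ[Y | MeasurableSpace.comap (fun ω => (U ω, A ω, C ω, Z ω, S ω)) inferInstance]
        =ᵐ[μ] fun ω => Real.exp (U ω + b (S ω) (A ω) (C ω) + τ (S ω) (C ω)))
    (hexpint : ∀ (a : 𝒜) (c : 𝒞) (z : 𝒵) (s : Fin 4),
      IntegrableOn (fun ω => Real.exp (U ω)) (dyadEvent A C Z S a c z s) μ)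
    -- (2) exponential tilting of the conditional laws of U
    (htilt : ∀ (a : 𝒜) (c : 𝒞) (z : 𝒵) (s : Fin 4), s ≠ 0 →
      Measure.map U (μ[|dyadEvent A C Z S a c z s])
        = expTilt (Measure.map U (μ[|dyadEvent A C Z S a c z 0])) (α s))
    (hmgf : ∀ (a : 𝒜) (c : 𝒞) (z : 𝒵), ∃ l r : ℝ,
      (∀ s : Fin 4, s ≠ 0 → α s ∈ Set.Ioo l r ∧ 1 + α s ∈ Set.Ioo l r) ∧
      ∀ t ∈ Set.Ioo l r, Integrable (fun x => Real.exp (t * x))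
        (Measure.map U (μ[|dyadEvent A C Z S a c z 0])))
    -- (4) for every s, the centered law of Δₛ given {W = w, S = s} depends on w
    -- only through c
    (hcent : ∀ (s : Fin 4) (a a' : 𝒜) (c : 𝒞) (z z' : 𝒵),
      Measure.map (fun ω => U ω - condMean μ U (dyadEvent A C Z S a c z s))
          (μ[|dyadEvent A C Z S a c z s])
        = Measure.map (fun ω => U ω - condMean μ U (dyadEvent A C Z S a' c z' s))
          (μ[|dyadEvent A C Z S a' c z' s])) :
    ∀ (a : 𝒜) (c : 𝒞) (z : 𝒵) (s : Fin 4), s ≠ 0 →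
      (condMean μ Y (dyadEvent A C Z S a c z s)
        = Real.exp
            ((∑ t ∈ Finset.univ.filter (fun t => t ≠ s),
                (condMean μ U (dyadEvent A C Z S a c z s)
                    - condMean μ U (dyadEvent A C Z S a c z t))
                  * ((μ (dyadEvent A C Z S a c z t)).toReal
                      / (μ (wEvent A C Z a c z)).toReal))
              + b s a c
              + (τ s c + condMean μ U (wEvent A C Z a c z)
                  + Real.log (condMean μ
                      (fun ω => Real.exp (U ω - condMean μ U (dyadEvent A C Z S a c z s)))
                      (dyadEvent A C Z S a c z s)))))
      ∧ ∀ (t : Fin 4) (a' : 𝒜) (z' : 𝒵),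
          condMean μ U (dyadEvent A C Z S a c z s)
              - condMean μ U (dyadEvent A C Z S a c z t)
            = condMean μ U (dyadEvent A C Z S a' c z' s)
              - condMean μ U (dyadEvent A C Z S a' c z' t) := by
  intro a c z s hs
  have hφ : Measurable fun ω => (U ω, A ω, C ω, Z ω, S ω) := by fun_prop
  have hE : ∀ t, MeasurableSet (dyadEvent A C Z S a c z t) :=
    fun t => hφ.comap_le _ (measurableSet_comap_dyadEvent A C Z S U t)
  have hgap : ∀ (t : Fin 4) (a' : 𝒜) (z' : 𝒵),
      condMean μ U (dyadEvent A C Z S a c z t) - condMean μ U (dyadEvent A C Z S a c z 0)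
        = condMean μ U (dyadEvent A C Z S a' c z' t)
          - condMean μ U (dyadEvent A C Z S a' c z' 0) := by
    intro t a' z'
    rcases eq_or_ne t 0 with rfl | ht
    · simp
    obtain ⟨l, r, hαlr, hmgflr⟩ := hmgf a c z
    refine condMean_sub_condMean_eq_of_map_eq_expTilt hU (hpos a c z 0).ne' (htilt a c z t ht)
      (htilt a' c z' t ht) (hcent 0 a a' c z z') ?_
    exact isOpen_Ioo.subset_interior_iff.mpr hmgflr (hαlr t ht).1
  refine ⟨?_, fun t a' z' => by linarith [hgap s a' z', hgap t a' z']⟩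
  have hexp := condMean_exp_pos (hpos a c z s).ne' (hexpint a c z s)
  rw [condMean_dyadEvent_eq_of_condExp_eq hφ hYint houtcome,
    Finset.sum_filter_of_ne fun t _ ht => by rintro rfl; simp at ht,
    ← iUnion_dyadEvent A C Z S]
  simp_rw [← measureReal_def]
  rw [sum_sub_condMean_mul_eq hE (pairwise_disjoint_dyadEvent A C Z S)
      ((hpos a c z s).trans_le (measure_mono (Set.subset_iUnion _ s))).ne'
      fun _ => hUint.integrableOn, log_condMean_exp_sub hexp]
  conv_lhs => rw [← Real.exp_log hexp, ← Real.exp_add]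
  congr 1
  ring

/-- **Proposition 2 (multiplicative identification with a negative control exposure),
discrete-covariate form.**  In the dyadic setup, with `Y` nonnegative and integrable,
assume:
(1) the multiplicative outcome model
`E[Y | σ(U, A, C, Z, S)] = exp(U + b(S, A, C) + τ(S, C))` a.e., with `exp U` integrable
given each event `{W = w, S = s}`;
(2) for every `w = (a, c, z)` and every nameship type `s ≠ 0` the law of `U` given
`{W = w, S = s}` is the exponential tilt by `αₛ` of its law given `{W = w, S = 0}`, with the
moment generating function of the latter finite on an open interval containing all `αₛ` and
`1 + αₛ`;
(3) `E[U | W = w]` depends on `w` only through `c` (mean independence);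
(4) for every `s`, the law of `Δₛ = U − E[U | W = w, S = s]` under `μ(· | W = w, S = s)`
depends on `w` only through `c`.  Then for every `w = (a, c, z)` and every `s ≠ 0`,
`E[Y | W = w, S = s]
  = exp( ∑_{s̃ ≠ s} β^{s s̃}(c) μ(S = s̃ | W = w) + b(s, a, c) + τ̄(s, c) )`,
where `β^{s s̃}(c) = E[U | W = w, S = s] − E[U | W = w, S = s̃]` depends on `w` only through
`c` and `τ̄(s, c) = τ(s, c) + E[U | W = w] + log E[exp Δₛ | W = w, S = s]` depends only on
`(s, c)`. -/
theorem proposition_two_multiplicative_identification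
    {Ω 𝒜 𝒞 𝒵 : Type*} [MeasurableSpace Ω]
    [MeasurableSpace 𝒜] [MeasurableSingletonClass 𝒜] [Countable 𝒜]
    [MeasurableSpace 𝒞] [MeasurableSingletonClass 𝒞] [Countable 𝒞]
    [MeasurableSpace 𝒵] [MeasurableSingletonClass 𝒵] [Countable 𝒵]
    (μ : Measure Ω) [IsProbabilityMeasure μ]
    (A : Ω → 𝒜) (C : Ω → 𝒞) (Z : Ω → 𝒵) (S : Ω → Fin 4)
    (hA : Measurable A) (hC : Measurable C) (hZ : Measurable Z) (hS : Measurable S)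
    (U : Ω → ℝ) (hU : Measurable U) (hUint : Integrable U μ)
    (Y : Ω → ℝ) (hYnn : ∀ ω, 0 ≤ Y ω) (hYint : Integrable Y μ)
    (b : Fin 4 → 𝒜 → 𝒞 → ℝ) (τ : Fin 4 → 𝒞 → ℝ) (α : Fin 4 → ℝ)
    (hpos : ∀ (a : 𝒜) (c : 𝒞) (z : 𝒵) (s : Fin 4), 0 < μ (dyadEvent A C Z S a c z s))
    -- (1) multiplicative outcome model w.r.t. the σ-algebra generated by (U, A, C, Z, S)
    (houtcome :
      μ[Y | MeasurableSpace.comap (fun ω => (U ω, A ω, C ω, Z ω, S ω)) inferInstance]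
        =ᵐ[μ] fun ω => Real.exp (U ω + b (S ω) (A ω) (C ω) + τ (S ω) (C ω)))
    (hexpint : ∀ (a : 𝒜) (c : 𝒞) (z : 𝒵) (s : Fin 4),
      IntegrableOn (fun ω => Real.exp (U ω)) (dyadEvent A C Z S a c z s) μ)
    -- (2) exponential tilting of the conditional laws of U
    (htilt : ∀ (a : 𝒜) (c : 𝒞) (z : 𝒵) (s : Fin 4), s ≠ 0 →
      Measure.map U (μ[|dyadEvent A C Z S a c z s])
        = expTilt (Measure.map U (μ[|dyadEvent A C Z S a c z 0])) (α s))
    (hmgf : ∀ (a : 𝒜) (c : 𝒞) (z : 𝒵), ∃ l r : ℝ,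
      (∀ s : Fin 4, s ≠ 0 → α s ∈ Set.Ioo l r ∧ 1 + α s ∈ Set.Ioo l r) ∧
      ∀ t ∈ Set.Ioo l r, Integrable (fun x => Real.exp (t * x))
        (Measure.map U (μ[|dyadEvent A C Z S a c z 0])))
    -- (3) mean independence: E[U | W = w] depends on w only through c
    (hmeanindep : ∀ (a a' : 𝒜) (c : 𝒞) (z z' : 𝒵),
      condMean μ U (wEvent A C Z a c z) = condMean μ U (wEvent A C Z a' c z'))
    -- (4) for every s, the centered law of Δₛ given {W = w, S = s} depends on w
    -- only through c
    (hcent : ∀ (s : Fin 4) (a a' : 𝒜) (c : 𝒞) (z z' : 𝒵),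
      Measure.map (fun ω => U ω - condMean μ U (dyadEvent A C Z S a c z s))
          (μ[|dyadEvent A C Z S a c z s])
        = Measure.map (fun ω => U ω - condMean μ U (dyadEvent A C Z S a' c z' s))
          (μ[|dyadEvent A C Z S a' c z' s])) :
    ∀ (a : 𝒜) (c : 𝒞) (z : 𝒵) (s : Fin 4), s ≠ 0 →
      (condMean μ Y (dyadEvent A C Z S a c z s)
        = Real.exp
            ((∑ t ∈ Finset.univ.filter (fun t => t ≠ s),
                (condMean μ U (dyadEvent A C Z S a c z s)
                    - condMean μ U (dyadEvent A C Z S a c z t))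
                  * ((μ (dyadEvent A C Z S a c z t)).toReal
                      / (μ (wEvent A C Z a c z)).toReal))
              + b s a c
              + (τ s c + condMean μ U (wEvent A C Z a c z)
                  + Real.log (condMean μ
                      (fun ω => Real.exp (U ω - condMean μ U (dyadEvent A C Z S a c z s)))
                      (dyadEvent A C Z S a c z s)))))
      ∧ ∀ (t : Fin 4) (a' : 𝒜) (z' : 𝒵),
          condMean μ U (dyadEvent A C Z S a c z s)
              - condMean μ U (dyadEvent A C Z S a c z t)
            = condMean μ U (dyadEvent A C Z S a' c z' s)
              - condMean μ U (dyadEvent A C Z S a' c z' t) :=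
  proposition_two_multiplicative_identification_general μ A C Z S hA hC hZ hS U hU hUint Y hYint b τ
    α hpos houtcome hexpint htilt hmgf hcent
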